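/- arXiv:2009.02680 — 9 statements merged into one kernel-verified Lean document; each statement's English description precedes it below -/
import Mathlib

section
/- Let z_A, z_B, z_C ∈ ℂ and r_A, r_B, r_C > 0 be the centers and radii of three pairwise externally tangent circles, i.e. |z_A − z_B| = r_A + r_B, |z_B − z_C| = r_B + r_C, |z_C − z_A| = r_C + r_A. Suppose a, b ∈ ℂ satisfy a² = (z_A − z_C)/(r_C r_A) and b² = (z_B − z_C)/(r_C r_B). Then (Im(conj(a) · b))² = (1/r_C)²; that is, up to the sign ambiguity of the spinors, the cross product a × b equals the curvature C = 1/r_C of the common anchor disk. -/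
/-!
Write `u = z_A - z_C`, `v = z_B - z_C` and `w = conj a * b`. Then `‖w‖² = ‖a²‖ ‖b²‖` and
`w² = conj (a²) b²` depend only on the squares, so `(Im w)² = (‖w‖² - Re w²) / 2` equals
`(‖u‖ ‖v‖ - Re (conj u v)) / (2 r_C² r_A r_B)`. The law of cosines in the triangle of centres,
whose sides are `r_C + r_A`, `r_C + r_B`, `r_A + r_B`, evaluates the numerator to `2 r_A r_B`.
-/

open ComplexConjugate

namespace Complex

theorem im_sq_eq_half_sub (w : ℂ) : w.im ^ 2 = (‖w‖ ^ 2 - (w ^ 2).re) / 2 := by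
  rw [Complex.sq_norm, normSq_apply, pow_two w, mul_re]
  ring

theorem re_conj_mul_eq_half_sub (u v : ℂ) :
    (conj u * v).re = (‖u‖ ^ 2 + ‖v‖ ^ 2 - ‖u - v‖ ^ 2) / 2 := by
  rw [norm_sub_sq_real, Complex.inner, mul_comm]
  ring

/-- The cross product of two square roots is determined, up to sign, by their squares. -/
theorem im_conj_mul_sq (a b : ℂ) :
    (conj a * b).im ^ 2 = (‖a ^ 2‖ * ‖b ^ 2‖ - (conj (a ^ 2) * b ^ 2).re) / 2 := by
  rw [im_sq_eq_half_sub, norm_mul, norm_conj, norm_pow, norm_pow, mul_pow, mul_pow, map_pow]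

theorem im_conj_mul_sq_of_sq_eq_div {a b u v : ℂ} {s t : ℝ} (hst : 0 ≤ s * t)
    (ha : a ^ 2 = u / s) (hb : b ^ 2 = v / t) :
    (conj a * b).im ^ 2 = (‖u‖ * ‖v‖ - (conj u * v).re) / (2 * (s * t)) := by
  have hnorm : ‖a ^ 2‖ * ‖b ^ 2‖ = ‖u‖ * ‖v‖ / (s * t) := by
    rw [ha, hb, norm_div, norm_div, norm_real, norm_real, Real.norm_eq_abs, Real.norm_eq_abs,
      div_mul_div_comm, ← abs_mul, abs_of_nonneg hst]
  have hre : (conj (a ^ 2) * b ^ 2).re = (conj u * v).re / (s * t) := by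
    rw [ha, hb, map_div₀, conj_ofReal, div_mul_div_comm, ← ofReal_mul, div_ofReal_re]
  rw [im_conj_mul_sq, hnorm, hre, ← sub_div, div_div, mul_comm (s * t)]

end Complex

theorem norm_mul_norm_sub_re_conj_mul_of_tangent {u v : ℂ} {r₁ r₂ r₃ : ℝ}
    (hu : ‖u‖ = r₃ + r₁) (hv : ‖v‖ = r₃ + r₂) (huv : ‖u - v‖ = r₁ + r₂) :
    ‖u‖ * ‖v‖ - (conj u * v).re = 2 * r₁ * r₂ := by
  rw [Complex.re_conj_mul_eq_half_sub, hu, hv, huv]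
  ring

/-- **Cross product of two tangency spinors anchored at a common disk.**
For three pairwise externally tangent circles with centers `z_A z_B z_C` and radii
`r_A r_B r_C > 0`, if `a² = (z_A − z_C)/(r_C r_A)` and `b² = (z_B − z_C)/(r_C r_B)`,
then `(a × b)² = (Im(conj a · b))² = (1/r_C)²`: up to sign, the cross product of the
two spinors equals the curvature of the common anchor disk `C`. -/
theorem tangency_spinor_cross (zA zB zC : ℂ) (rA rB rC : ℝ)
    (hrA : 0 < rA) (hrB : 0 < rB) (hrC : 0 < rC)
    (hAB : ‖zA - zB‖ = rA + rB)
    (hBC : ‖zB - zC‖ = rB + rC)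
    (hCA : ‖zC - zA‖ = rC + rA)
    (a b : ℂ)
    (ha : a ^ 2 = (zA - zC) / ((rC : ℂ) * (rA : ℂ)))
    (hb : b ^ 2 = (zB - zC) / ((rC : ℂ) * (rB : ℂ))) :
    ((starRingEnd ℂ) a * b).im ^ 2 = (1 / rC) ^ 2 := by
  have hst : 0 ≤ rC * rA * (rC * rB) := by
    rw [show rC * rA * (rC * rB) = rC ^ 2 * (rA * rB) by ring]
    positivity
  rw [← Complex.ofReal_mul] at ha hb
  rw [Complex.im_conj_mul_sq_of_sq_eq_div hst ha hb,
    norm_mul_norm_sub_re_conj_mul_of_tangent (r₃ := rC) (by rwa [norm_sub_rev])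
      (by rwa [add_comm]) (by rwa [sub_sub_sub_cancel_right])]
  field_simp
end

section
/- For every z ∈ ℂ, writing x = Re z, y = Im z and (A, B, C) = κ(z) = (1 − y, x² + y² − y, y), one has AB + BC + CA = x². Consequently the two Descartes completions of the triple are A + B + C ± 2|x|. -/
noncomputable def kappa (z : ℂ) : ℝ × ℝ × ℝ :=
  (1 - z.im, z.re ^ 2 + z.im ^ 2 - z.im, z.im)

theorem kappa_pairwise_products_sum (z : ℂ) :
    (kappa z).1 * (kappa z).2.1 + (kappa z).2.1 * (kappa z).2.2 +
      (kappa z).2.2 * (kappa z).1 = z.re ^ 2 := by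
  simp only [kappa]
  ring

/-- **The Descartes discriminant of `κ(z)` is `x²`.**
For `(A, B, C) = κ(z)` one has `AB + BC + CA = x²`, so the two Descartes
completions of the triple are `A + B + C ± 2|x|`. -/
theorem kappa_discriminant (z : ℂ) :
    (kappa z).1 * (kappa z).2.1 + (kappa z).2.1 * (kappa z).2.2 +
        (kappa z).2.2 * (kappa z).1 = z.re ^ 2 ∧
      (kappa z).1 + (kappa z).2.1 + (kappa z).2.2 +
          2 * Real.sqrt ((kappa z).1 * (kappa z).2.1 + (kappa z).2.1 * (kappa z).2.2 +
            (kappa z).2.2 * (kappa z).1) =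
        (kappa z).1 + (kappa z).2.1 + (kappa z).2.2 + 2 * |z.re| ∧
      (kappa z).1 + (kappa z).2.1 + (kappa z).2.2 -
          2 * Real.sqrt ((kappa z).1 * (kappa z).2.1 + (kappa z).2.1 * (kappa z).2.2 +
            (kappa z).2.2 * (kappa z).1) =
        (kappa z).1 + (kappa z).2.1 + (kappa z).2.2 - 2 * |z.re| := by
  have hsum := kappa_pairwise_products_sum z
  refine ⟨hsum, ?_, ?_⟩ <;> rw [hsum, Real.sqrt_sq_eq_abs]
end

section
/- For all real numbers A, B, C with A + C > 0 and AB + BC + CA ≥ 0, there exist unique x ≥ 0, y ∈ ℝ and λ > 0 such that λ(1 − y) = A, λ(x² + y² − y) = B and λ·y = C; explicitly λ = A + C, y = C/(A + C), x = √(AB + BC + CA)/(A + C). Thus every curvature triple of a tricycle is, up to a positive scale, of the form κ(z) for a unique z = x + iy with x ≥ 0. -/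
/-!
Adding the first and last equations gives `λ = A + C`, and then `y = C / (A + C)`.
The key identity is `AB + BC + CA = (λx)²` for `(A, B, C) = λ(1 - y, x² + y² - y, y)`,
so the discriminant determines `x ≥ 0` as `√(AB + BC + CA) / λ`; conversely these
values solve the equations.
-/

lemma scaled_curvatures_discriminant (x y l : ℝ) :
    l * (1 - y) * (l * (x ^ 2 + y ^ 2 - y)) + l * (x ^ 2 + y ^ 2 - y) * (l * y)
      + l * y * (l * (1 - y)) = (l * x) ^ 2 := by
  ring

lemma scaled_curvatures_eq_explicit {A B C x y l : ℝ} (hx : 0 ≤ x) (hl : 0 < l)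
    (hA : l * (1 - y) = A) (hB : l * (x ^ 2 + y ^ 2 - y) = B) (hC : l * y = C) :
    x = Real.sqrt (A * B + B * C + C * A) / (A + C) ∧ y = C / (A + C) ∧ l = A + C := by
  have hsum : A + C = l := by rw [← hA, ← hC]; ring
  have hdisc : A * B + B * C + C * A = (l * x) ^ 2 := by
    rw [← hA, ← hB, ← hC]
    exact scaled_curvatures_discriminant x y l
  rw [hsum, hdisc, Real.sqrt_sq (by positivity), ← hC, mul_div_cancel_left₀ _ hl.ne',
    mul_div_cancel_left₀ _ hl.ne']
  exact ⟨rfl, rfl, rfl⟩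

lemma explicit_solves_scaled_curvatures {A B C : ℝ} (hAC : 0 < A + C)
    (hD : 0 ≤ A * B + B * C + C * A) :
    0 ≤ Real.sqrt (A * B + B * C + C * A) / (A + C) ∧ 0 < A + C ∧
      (A + C) * (1 - C / (A + C)) = A ∧
      (A + C) * ((Real.sqrt (A * B + B * C + C * A) / (A + C)) ^ 2
        + (C / (A + C)) ^ 2 - C / (A + C)) = B ∧
      (A + C) * (C / (A + C)) = C := by
  have hsq := Real.sq_sqrt hD
  refine ⟨by positivity, hAC, by field_simp; ring, ?_, by field_simp⟩
  rw [div_pow, hsq]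
  field_simp
  ring

/-- **Parametrization of tricycles by the projective spinor plane.**
For all reals `A B C` with `A + C > 0` and `AB + BC + CA ≥ 0` there exist unique
`x ≥ 0`, `y ∈ ℝ`, `λ > 0` with `λ(1 − y) = A`, `λ(x² + y² − y) = B`, `λy = C`;
explicitly `λ = A + C`, `y = C/(A + C)`, `x = √(AB + BC + CA)/(A + C)`. -/
theorem tricycle_parametrization (A B C : ℝ) (hAC : 0 < A + C)
    (hD : 0 ≤ A * B + B * C + C * A) :
    (∃! p : ℝ × ℝ × ℝ,
        0 ≤ p.1 ∧ 0 < p.2.2 ∧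
          p.2.2 * (1 - p.2.1) = A ∧
          p.2.2 * (p.1 ^ 2 + p.2.1 ^ 2 - p.2.1) = B ∧
          p.2.2 * p.2.1 = C) ∧
      (letI x := Real.sqrt (A * B + B * C + C * A) / (A + C)
       letI y := C / (A + C)
       letI l := A + C
       0 ≤ x ∧ 0 < l ∧ l * (1 - y) = A ∧ l * (x ^ 2 + y ^ 2 - y) = B ∧ l * y = C) := by
  have hsol := explicit_solves_scaled_curvatures hAC hD
  refine ⟨⟨(Real.sqrt (A * B + B * C + C * A) / (A + C), C / (A + C), A + C), hsol, ?_⟩, hsol⟩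
  rintro ⟨x, y, l⟩ ⟨hx, hl, hA, hB, hC⟩
  obtain ⟨rfl, rfl, rfl⟩ := scaled_curvatures_eq_explicit hx hl hA hB hC
  rfl
end

section
/- For every z ∈ ℂ with z ≠ 0, writing (A, B, C) = κ(z), the inversion S satisfies κ(S(z)) = (B/|z|², A/|z|², C/|z|²); that is, S exchanges the curvatures A and B of the tricycle up to the common positive rescaling factor 1/|z|². -/
/-- The inversion `S(z) = 1/conj z` in the unit circle centered at `0`. -/
noncomputable def Smap (z : ℂ) : ℂ := ((starRingEnd ℂ) z)⁻¹

/-! Since `S(z) = z / |z|²`, the first and last curvatures of `κ(S z)` are read off directly,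
while `|S z|² = 1 / |z|²` turns `B(S z) = |S z|² − Im (S z)` into `(1 − y) / |z|² = A / |z|²`. -/

open Complex

lemma kappa_fst (z : ℂ) : (kappa z).1 = 1 - z.im := rfl

lemma kappa_snd (z : ℂ) : (kappa z).2.1 = normSq z - z.im := by
  simp only [kappa, normSq_apply]
  ring

lemma kappa_snd_snd (z : ℂ) : (kappa z).2.2 = z.im := rfl

lemma Smap_eq_div_normSq (z : ℂ) : Smap z = z / (normSq z : ℂ) := by
  rw [Smap, inv_def, normSq_conj, conj_conj, ofReal_inv, div_eq_mul_inv]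

lemma Smap_im (z : ℂ) : (Smap z).im = z.im / normSq z := by
  rw [Smap_eq_div_normSq, div_ofReal_im]

lemma normSq_Smap (z : ℂ) : normSq (Smap z) = (normSq z)⁻¹ := by
  rw [Smap, map_inv₀, normSq_conj]

/-- **`S` swaps the curvatures `A` and `B` up to rescaling by `1/|z|²`.**
With `(A, B, C) = κ(z)` and `z ≠ 0`, one has
`κ(S(z)) = (B/|z|², A/|z|², C/|z|²)`. -/
theorem kappa_Smap (z : ℂ) (hz : z ≠ 0) :
    kappa (Smap z) =
      ((kappa z).2.1 / ‖z‖ ^ 2,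
       (kappa z).1 / ‖z‖ ^ 2,
       (kappa z).2.2 / ‖z‖ ^ 2) := by
  have hn : normSq z ≠ 0 := normSq_eq_zero.not.mpr hz
  rw [Complex.sq_norm]
  refine Prod.ext ?_ (Prod.ext ?_ ?_) <;> dsimp only
  · rw [kappa_fst, Smap_im, kappa_snd]
    field_simp
  · rw [kappa_snd, normSq_Smap, Smap_im, kappa_fst]
    ring
  · rw [kappa_snd_snd, kappa_snd_snd, Smap_im]
end

section
/- For every z ∈ ℂ with z ≠ i, writing (A, B, C) = κ(z) and E = |z − i|², the inversion R satisfies κ(R(z)) = (A/E, C/E, B/E); that is, R exchanges the curvatures B and C of the tricycle up to the common positive rescaling factor 1/E. -/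
/-- The inversion `R(z) = i + 1/conj(z − i)` in the unit circle centered at `i`. -/
noncomputable def Rmap (z : ℂ) : ℂ := Complex.I + ((starRingEnd ℂ) (z - Complex.I))⁻¹

open Complex ComplexConjugate

lemma kappa_I_add (w : ℂ) : kappa (I + w) = (-w.im, normSq w + w.im, w.im + 1) := by
  simp only [kappa, add_re, add_im, I_re, I_im, normSq_apply, Prod.mk.injEq]
  refine ⟨?_, ?_, ?_⟩ <;> ring

lemma Complex.inv_conj_eq_mul_inv_normSq (w : ℂ) : (conj w)⁻¹ = w * ((normSq w)⁻¹ : ℝ) := by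
  rw [inv_def, conj_conj, normSq_conj]

lemma Rmap_I_add (w : ℂ) : Rmap (I + w) = I + w * ((normSq w)⁻¹ : ℝ) := by
  rw [Rmap, add_sub_cancel_left, inv_conj_eq_mul_inv_normSq]

/-- **`R` swaps the curvatures `B` and `C` up to rescaling by `1/E`, `E = |z − i|²`.**
With `(A, B, C) = κ(z)` and `z ≠ i`, one has `κ(R(z)) = (A/E, C/E, B/E)`. -/
theorem kappa_Rmap (z : ℂ) (hz : z ≠ Complex.I) :
    kappa (Rmap z) =
      ((kappa z).1 / ‖z - Complex.I‖ ^ 2,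
       (kappa z).2.2 / ‖z - Complex.I‖ ^ 2,
       (kappa z).2.1 / ‖z - Complex.I‖ ^ 2) := by
  obtain ⟨w, rfl⟩ : ∃ w, z = I + w := ⟨z - I, by ring⟩
  have hw : normSq w ≠ 0 := normSq_eq_zero.not.mpr (by simpa using hz)
  rw [Rmap_I_add, kappa_I_add, kappa_I_add, add_sub_cancel_left, Complex.sq_norm, normSq_mul,
    normSq_ofReal, im_mul_ofReal]
  simp only [Prod.mk.injEq]
  refine ⟨?_, ?_, ?_⟩ <;> field_simp <;> ring
end

section
/- The composition S∘F has order three: for every z ∈ ℂ with z ≠ 0 and z ≠ i, (S∘F)((S∘F)(z)) = (F∘S)(z) and (S∘F)((S∘F)((S∘F)(z))) = z. Hence {id, F∘S, S∘F} forms a group isomorphic to ℤ₃ (the anchor-change group G of the tricycle). -/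
/-- The reflection `F(z) = conj z + i` in the line `Im z = 1/2`. -/
noncomputable def Fmap (z : ℂ) : ℂ := (starRingEnd ℂ) z + Complex.I

/-!
`S ∘ F` is the Möbius map `w ↦ 1 / (w - i)`, and `F ∘ S` is `w ↦ 1 / w + i`; since `i² = -1`,
composing the first with itself gives the second. As `F` and `S` are involutions,
`(S ∘ F)³ = (S ∘ F) ∘ (F ∘ S) = id`.
-/

open Complex

theorem Fmap_involutive : Function.Involutive Fmap := fun z => by
  simp [Fmap]

theorem Smap_involutive : Function.Involutive Smap := fun z => by
  simp [Smap]

theorem Smap_Fmap (w : ℂ) : Smap (Fmap w) = (w - I)⁻¹ := by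
  simp [Smap, Fmap, sub_eq_add_neg]

theorem Fmap_Smap (w : ℂ) : Fmap (Smap w) = w⁻¹ + I := by
  simp [Smap, Fmap]

theorem inv_sub_inv_sub_eq_inv_add {K : Type*} [Field K] {a z : K} (ha : a ^ 2 = -1)
    (hz : z ≠ 0) (hza : z ≠ a) : ((z - a)⁻¹ - a)⁻¹ = z⁻¹ + a := by
  have hza' : z - a ≠ 0 := sub_ne_zero.mpr hza
  apply inv_eq_of_mul_eq_one_right
  field_simp
  linear_combination (a * z - z ^ 2 + 1) * ha

/-- **`S∘F` has order three** (the anchor-change group `G = {id, FS, SF} ≅ ℤ₃`):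
for `z ≠ 0`, `z ≠ i`, `(S∘F)² z = (F∘S) z` and `(S∘F)³ z = z`. -/
theorem SF_order_three (z : ℂ) (hz0 : z ≠ 0) (hzi : z ≠ Complex.I) :
    Smap (Fmap (Smap (Fmap z))) = Fmap (Smap z) ∧
      Smap (Fmap (Smap (Fmap (Smap (Fmap z))))) = z := by
  have square : Smap (Fmap (Smap (Fmap z))) = Fmap (Smap z) := by
    rw [Smap_Fmap, Smap_Fmap, Fmap_Smap, inv_sub_inv_sub_eq_inv_add I_sq hz0 hzi]
  refine ⟨square, ?_⟩
  rw [square, Fmap_involutive (Smap z), Smap_involutive z]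
end

section
/- The symmetry group Θ = gen{S, F, H} preserves the depth function: for every n ∈ ℕ, D (κ(F(z))) n ↔ D (κ(z)) n for all z ∈ ℂ; D (κ(S(z))) n ↔ D (κ(z)) n for all z ≠ 0; D (κ(R(z))) n ↔ D (κ(z)) n for all z ≠ i; and D (κ(H(z))) n ↔ D (κ(z)) n for all z ∈ ℂ. -/
/-- The reflection `H(z) = −conj z` in the imaginary axis. -/
noncomputable def Hmap (z : ℂ) : ℂ := -(starRingEnd ℂ) z

/-- The curvature appended by a Descartes ascending step:
`a + b + c − 2√(ab + bc + ca)` (symmetric in the entries). -/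
noncomputable def descartesStep (t : ℝ × ℝ × ℝ) : ℝ :=
  t.1 + t.2.1 + t.2.2 -
    2 * Real.sqrt (t.1 * t.2.1 + t.2.1 * t.2.2 + t.2.2 * t.1)

/-- The Descartes ascending step `π`: delete a maximal entry of the triple and
append `a + b + c − 2√(ab + bc + ca)`. -/
noncomputable def piStep (t : ℝ × ℝ × ℝ) : ℝ × ℝ × ℝ :=
  if t.2.1 ≤ t.1 ∧ t.2.2 ≤ t.1 then (t.2.1, t.2.2, descartesStep t)
  else if t.2.2 ≤ t.2.1 then (t.1, t.2.2, descartesStep t)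
  else (t.1, t.2.1, descartesStep t)

/-- The depth relation: `D t 0` iff some entry of `t` is `≤ 0`, and `D t (n+1)` iff
all entries of `t` are `> 0` and `D (π t) n`. -/
inductive DepthRel : ℝ × ℝ × ℝ → ℕ → Prop
  | zero (t : ℝ × ℝ × ℝ) (h : t.1 ≤ 0 ∨ t.2.1 ≤ 0 ∨ t.2.2 ≤ 0) : DepthRel t 0
  | succ (t : ℝ × ℝ × ℝ) (n : ℕ) (h : 0 < t.1 ∧ 0 < t.2.1 ∧ 0 < t.2.2)
      (hD : DepthRel (piStep t) n) : DepthRel t (n + 1)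

/-! Each of `F, S, R, H` acts on `κ(z)` by permuting its three entries, the two inversions also
scaling them by the positive factor `1/|z|²`, resp. `1/|z − i|²`. The depth of a triple depends
only on its entries as a multiset, since `π` deletes a maximal entry and appends a symmetric
function of the entries, and it is invariant under positive scaling, since `π` is homogeneous of
degree one. -/

open Complex

def tripleEntries {α : Type*} (t : α × α × α) : Multiset α := t.1 ::ₘ t.2.1 ::ₘ t.2.2 ::ₘ 0

lemma forall_mem_tripleEntries {α : Type*} {p : α → Prop} {t : α × α × α} :
    (∀ x ∈ tripleEntries t, p x) ↔ p t.1 ∧ p t.2.1 ∧ p t.2.2 := by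
  simp [tripleEntries]

lemma tripleEntries_smul (c : ℝ) (t : ℝ × ℝ × ℝ) :
    tripleEntries (c • t) = (tripleEntries t).map (c * ·) := by
  simp [tripleEntries]

lemma esymm_two_tripleEntries (t : ℝ × ℝ × ℝ) :
    (tripleEntries t).esymm 2 = t.1 * t.2.1 + t.2.1 * t.2.2 + t.2.2 * t.1 := by
  simp [tripleEntries, Multiset.esymm, Multiset.powersetCard_cons, Multiset.powersetCard_one]
  ring

lemma descartesStep_eq_esymm (t : ℝ × ℝ × ℝ) :
    descartesStep t = (tripleEntries t).sum - 2 * √((tripleEntries t).esymm 2) := by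
  rw [esymm_two_tripleEntries]
  simp [descartesStep, tripleEntries, add_assoc]

lemma exists_max_tripleEntries_piStep (t : ℝ × ℝ × ℝ) :
    ∃ x r, (∀ y ∈ tripleEntries t, y ≤ x) ∧ tripleEntries t = x ::ₘ r ∧
      tripleEntries (piStep t) = descartesStep t ::ₘ r := by
  obtain ⟨a, b, c⟩ := t
  unfold piStep
  split_ifs with h₁ h₂
  · refine ⟨a, b ::ₘ c ::ₘ 0, forall_mem_tripleEntries.2 ⟨le_rfl, h₁⟩, rfl, ?_⟩
    simp only [tripleEntries, Multiset.cons_swap]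
  · refine ⟨b, a ::ₘ c ::ₘ 0, forall_mem_tripleEntries.2 ⟨by grind, le_rfl, h₂⟩, ?_, ?_⟩ <;>
      simp only [tripleEntries, Multiset.cons_swap]
  · refine ⟨c, a ::ₘ b ::ₘ 0, forall_mem_tripleEntries.2 ⟨by grind, by grind, le_rfl⟩, ?_, ?_⟩ <;>
      simp only [tripleEntries, Multiset.cons_swap]

lemma tripleEntries_piStep_congr {t t' : ℝ × ℝ × ℝ} (h : tripleEntries t = tripleEntries t') :
    tripleEntries (piStep t) = tripleEntries (piStep t') := by
  obtain ⟨x, r, hx, ht, hπ⟩ := exists_max_tripleEntries_piStep t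
  obtain ⟨x', r', hx', ht', hπ'⟩ := exists_max_tripleEntries_piStep t'
  have hxx' : x = x' :=
    le_antisymm (hx' x (h ▸ ht ▸ Multiset.mem_cons_self x r))
      (hx x' (h ▸ ht' ▸ Multiset.mem_cons_self x' r'))
  subst hxx'
  have hr : r = r' := (Multiset.cons_inj_right x).1 (ht.symm.trans (h.trans ht'))
  rw [hπ, hπ', descartesStep_eq_esymm, descartesStep_eq_esymm, h, hr]

lemma depthRel_zero_iff (t : ℝ × ℝ × ℝ) :
    DepthRel t 0 ↔ ¬∀ x ∈ tripleEntries t, 0 < x := by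
  simp only [forall_mem_tripleEntries, not_and_or, not_lt]
  exact ⟨fun | .zero _ h => h, .zero t⟩

lemma depthRel_succ_iff (t : ℝ × ℝ × ℝ) (n : ℕ) :
    DepthRel t (n + 1) ↔ (∀ x ∈ tripleEntries t, 0 < x) ∧ DepthRel (piStep t) n := by
  rw [forall_mem_tripleEntries]
  exact ⟨fun | .succ _ _ h hD => ⟨h, hD⟩, fun h => .succ t n h.1 h.2⟩

theorem depthRel_congr {t t' : ℝ × ℝ × ℝ} (h : tripleEntries t = tripleEntries t') (n : ℕ) :
    DepthRel t n ↔ DepthRel t' n := by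
  induction n generalizing t t' with
  | zero => rw [depthRel_zero_iff, depthRel_zero_iff, h]
  | succ n ih =>
    rw [depthRel_succ_iff, depthRel_succ_iff, h, ih (tripleEntries_piStep_congr h)]

lemma descartesStep_smul {c : ℝ} (hc : 0 < c) (t : ℝ × ℝ × ℝ) :
    descartesStep (c • t) = c * descartesStep t := by
  obtain ⟨a, b, d⟩ := t
  simp only [descartesStep, Prod.smul_mk, smul_eq_mul]
  have h : c * a * (c * b) + c * b * (c * d) + c * d * (c * a) = c ^ 2 * (a * b + b * d + d * a) :=
    by ring
  rw [h, Real.sqrt_mul (by positivity), Real.sqrt_sq hc.le]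
  ring

lemma piStep_smul {c : ℝ} (hc : 0 < c) (t : ℝ × ℝ × ℝ) :
    piStep (c • t) = c • piStep t := by
  obtain ⟨a, b, d⟩ := t
  have hds := descartesStep_smul hc (a, b, d)
  simp only [Prod.smul_mk, smul_eq_mul] at hds
  simp only [piStep, Prod.smul_mk, smul_eq_mul, hds, mul_le_mul_iff_right₀ hc]
  split_ifs <;> rfl

theorem depthRel_smul_iff {c : ℝ} (hc : 0 < c) (t : ℝ × ℝ × ℝ) (n : ℕ) :
    DepthRel (c • t) n ↔ DepthRel t n := by
  induction n generalizing t with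
  | zero =>
    simp only [depthRel_zero_iff, tripleEntries_smul, Multiset.forall_mem_map_iff,
      mul_pos_iff_of_pos_left hc]
  | succ n ih =>
    simp only [depthRel_succ_iff, tripleEntries_smul, Multiset.forall_mem_map_iff,
      mul_pos_iff_of_pos_left hc, piStep_smul hc, ih]

lemma kappa_Fmap (z : ℂ) :
    kappa (Fmap z) = (z.im, z.re ^ 2 + z.im ^ 2 - z.im, 1 - z.im) := by
  simp only [kappa, Fmap, add_re, add_im, conj_re, conj_im, I_re, I_im, Prod.mk.injEq]
  refine ⟨by ring, by ring, by ring⟩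

lemma kappa_Smap_s16 {z : ℂ} (hz : z ≠ 0) :
    kappa (Smap z) = (normSq z)⁻¹ • (z.re ^ 2 + z.im ^ 2 - z.im, 1 - z.im, z.im) := by
  have hN : normSq z ≠ 0 := normSq_pos.2 hz |>.ne'
  simp only [kappa, Smap, Prod.smul_mk, smul_eq_mul, inv_re, inv_im, conj_re, conj_im,
    normSq_conj, Prod.mk.injEq]
  refine ⟨?_, ?_, ?_⟩ <;> field_simp <;> simp only [normSq_apply] <;> ring

lemma kappa_Rmap_s16 {z : ℂ} (hz : z ≠ I) :
    kappa (Rmap z) = (normSq (z - I))⁻¹ • (1 - z.im, z.im, z.re ^ 2 + z.im ^ 2 - z.im) := by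
  have hN : normSq (z - I) ≠ 0 := normSq_pos.2 (sub_ne_zero.2 hz) |>.ne'
  simp only [kappa, Rmap, Prod.smul_mk, smul_eq_mul, add_re, add_im, inv_re, inv_im, conj_re,
    conj_im, normSq_conj, sub_re, sub_im, I_re, I_im, Prod.mk.injEq]
  refine ⟨?_, ?_, ?_⟩ <;> field_simp <;>
    simp only [normSq_apply, sub_re, sub_im, I_re, I_im] <;> ring

lemma kappa_Hmap (z : ℂ) : kappa (Hmap z) = kappa z := by
  simp [kappa, Hmap]

/-- **The symmetry group `Θ = gen{S, F, H}` preserves the depth function.** -/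
theorem theta_preserves_depth (n : ℕ) :
    (∀ z : ℂ, DepthRel (kappa (Fmap z)) n ↔ DepthRel (kappa z) n) ∧
      (∀ z : ℂ, z ≠ 0 → (DepthRel (kappa (Smap z)) n ↔ DepthRel (kappa z) n)) ∧
      (∀ z : ℂ, z ≠ Complex.I →
        (DepthRel (kappa (Rmap z)) n ↔ DepthRel (kappa z) n)) ∧
      (∀ z : ℂ, DepthRel (kappa (Hmap z)) n ↔ DepthRel (kappa z) n) := by
  refine ⟨fun z => ?_, fun z hz => ?_, fun z hz => ?_, fun z => by rw [kappa_Hmap]⟩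
  · refine depthRel_congr ?_ n
    rw [kappa_Fmap]
    simp only [kappa, tripleEntries, Multiset.cons_swap]
  · rw [kappa_Smap_s16 hz, depthRel_smul_iff (inv_pos.2 (normSq_pos.2 hz))]
    refine depthRel_congr ?_ n
    simp only [kappa, tripleEntries, Multiset.cons_swap]
  · rw [kappa_Rmap_s16 hz, depthRel_smul_iff (inv_pos.2 (normSq_pos.2 (sub_ne_zero.2 hz)))]
    refine depthRel_congr ?_ n
    simp only [kappa, tripleEntries, Multiset.cons_swap]
end

section
/- Only rational spinors generate rational packings: let x ≥ 0 and y ∈ ℝ, and set (A, B, C) = (1 − y, x² + y² − y, y) and D = A + B + C + 2√(AB + BC + CA). If A, B, C and D are all rational, then x and y are rational. -/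
/-! The curvatures of the tricycle satisfy `AB + BC + CA = x²`, so for `x ≥ 0` the Descartes
completion is `D = A + B + C + 2x = 1 + B + 2x`. Hence `x = (D - B - 1) / 2` is rational. -/

theorem tricycle_curvature_pairwise_sum (x y : ℝ) :
    (1 - y) * (x ^ 2 + y ^ 2 - y) + (x ^ 2 + y ^ 2 - y) * y + y * (1 - y) = x ^ 2 := by
  ring

theorem tricycle_descartes_completion {x : ℝ} (hx : 0 ≤ x) (y : ℝ) :
    (1 - y) + (x ^ 2 + y ^ 2 - y) + y +
        2 * Real.sqrt ((1 - y) * (x ^ 2 + y ^ 2 - y) +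
          (x ^ 2 + y ^ 2 - y) * y + y * (1 - y)) =
      1 + (x ^ 2 + y ^ 2 - y) + 2 * x := by
  rw [tricycle_curvature_pairwise_sum, Real.sqrt_sq hx]
  ring

theorem rational_packing_rational_spinor_general (x y : ℝ) (hx : 0 ≤ x)
    (hB : ∃ q : ℚ, x ^ 2 + y ^ 2 - y = q)
    (hC : ∃ q : ℚ, y = q)
    (hD : ∃ q : ℚ,
      (1 - y) + (x ^ 2 + y ^ 2 - y) + y +
          2 * Real.sqrt ((1 - y) * (x ^ 2 + y ^ 2 - y) +
            (x ^ 2 + y ^ 2 - y) * y + y * (1 - y)) = q) :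
    (∃ q : ℚ, x = q) ∧ (∃ q : ℚ, y = q) := by
  obtain ⟨qB, hqB⟩ := hB
  obtain ⟨qD, hqD⟩ := hD
  rw [tricycle_descartes_completion hx, hqB] at hqD
  refine ⟨⟨(qD - qB - 1) / 2, ?_⟩, hC⟩
  push_cast
  linarith

/-- **Only rational spinors generate rational packings.**
Let `x ≥ 0`, `y ∈ ℝ`, `(A, B, C) = (1 − y, x² + y² − y, y)` and
`D = A + B + C + 2√(AB + BC + CA)`. If `A`, `B`, `C`, `D` are all rational,
then so are `x` and `y`. -/
theorem rational_packing_rational_spinor (x y : ℝ) (hx : 0 ≤ x)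
    (hA : ∃ q : ℚ, 1 - y = q)
    (hB : ∃ q : ℚ, x ^ 2 + y ^ 2 - y = q)
    (hC : ∃ q : ℚ, y = q)
    (hD : ∃ q : ℚ,
      (1 - y) + (x ^ 2 + y ^ 2 - y) + y +
          2 * Real.sqrt ((1 - y) * (x ^ 2 + y ^ 2 - y) +
            (x ^ 2 + y ^ 2 - y) * y + y * (1 - y)) = q) :
    (∃ q : ℚ, x = q) ∧ (∃ q : ℚ, y = q) :=
  rational_packing_rational_spinor_general x y hx hB hC hD
end

section
/- The translation T(z) = z + 1 of the projective spinor plane implements a Descartes move: for every z ∈ ℂ, writing (A, B, C) = κ(z) and x = Re z, one has κ(z + 1) = (A, A + B + C + 2x, C); in particular, if x ≥ 0, the middle entry equals the Descartes completion A + B + C + 2√(AB + BC + CA), i.e. T replaces disk B of the tricycle by a disk inscribed between A and C that completes (A, B, C) to a Descartes configuration. -/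
/-! The Descartes form `AB + BC + CA` of `κ(z)` is exactly `(Re z)²`, so for `Re z ≥ 0` the
square root in the Descartes completion is `Re z` itself. -/

theorem kappa_add_one (z : ℂ) :
    kappa (z + 1) =
      ((kappa z).1, (kappa z).1 + (kappa z).2.1 + (kappa z).2.2 + 2 * z.re, (kappa z).2.2) := by
  simp only [kappa, Complex.add_re, Complex.add_im, Complex.one_re, Complex.one_im]
  ring_nf

/-- **The translation `T(z) = z + 1` implements a Descartes move.**
With `(A, B, C) = κ(z)` and `x = Re z`, `κ(z + 1) = (A, A + B + C + 2x, C)`;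
if moreover `x ≥ 0`, the middle entry is the Descartes completion
`A + B + C + 2√(AB + BC + CA)`. -/
theorem kappa_translation (z : ℂ) :
    kappa (z + 1) =
        ((kappa z).1,
         (kappa z).1 + (kappa z).2.1 + (kappa z).2.2 + 2 * z.re,
         (kappa z).2.2) ∧
      (0 ≤ z.re →
        (kappa z).1 + (kappa z).2.1 + (kappa z).2.2 + 2 * z.re =
          (kappa z).1 + (kappa z).2.1 + (kappa z).2.2 +
            2 * Real.sqrt ((kappa z).1 * (kappa z).2.1 +
              (kappa z).2.1 * (kappa z).2.2 + (kappa z).2.2 * (kappa z).1)) := by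
  refine ⟨kappa_add_one z, fun hx => ?_⟩
  rw [kappa_pairwise_products_sum, Real.sqrt_sq hx]
end
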